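/- Let (M̄,ḡ) be a Riemannian manifold and ū a positive scalar function with -ū Ric_{ḡ} + ∇²_{ḡ}ū = 0 and Δ_{ḡ}ū = 0 (static vacuum pair). Define G'(h,v) = β_{ḡ}h + ū^{-1}dv + ū^{-2}v dū - ū^{-1}h(∇ū,·), where β_{ḡ}h = -div_{ḡ}h + (1/2)d(tr_{ḡ}h). Then for any vector field X, G'(L_X ḡ, X(ū)) = -Δ X - ū^{-1}∇X(∇ū,·) + ū^{-2}X(ū)dū, where we identify X with its dual covector via ḡ. -/

import Mathlib

noncomputable section

open scoped BigOperators
open MeasureTheory Filter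

/-- Points of the coordinate chart `ℝⁿ`. -/
abbrev Pt (n : ℕ) := Fin n → ℝ

/-- Partial derivative of a scalar function in the `i`-th coordinate direction. -/
def pd {n : ℕ} (i : Fin n) (f : Pt n → ℝ) (x : Pt n) : ℝ :=
  fderiv ℝ f x (Pi.single i 1)

/-- Inverse metric `g^{ij}` (pointwise matrix inverse). -/
def ginv {n : ℕ} (g : Pt n → Fin n → Fin n → ℝ) (x : Pt n) (i j : Fin n) : ℝ :=
  (Matrix.of (g x))⁻¹ i j

/-- Christoffel symbols `Γ^k_{ij}` of the metric `g`. -/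
def chr {n : ℕ} (g : Pt n → Fin n → Fin n → ℝ) (x : Pt n) (k i j : Fin n) : ℝ :=
  (1/2) * ∑ l, ginv g x k l *
    (pd i (fun y => g y j l) x + pd j (fun y => g y i l) x - pd l (fun y => g y i j) x)

/-- Covariant derivative of a covector field: `X_{i;j}`. -/
def cdCov {n : ℕ} (g : Pt n → Fin n → Fin n → ℝ) (X : Pt n → Fin n → ℝ)
    (x : Pt n) (i j : Fin n) : ℝ :=
  pd j (fun y => X y i) x - ∑ k, chr g x k i j * X x k

/-- Covariant derivative of a vector field: `X^i_{;j}`. -/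
def cdVec {n : ℕ} (g : Pt n → Fin n → Fin n → ℝ) (X : Pt n → Fin n → ℝ)
    (x : Pt n) (i j : Fin n) : ℝ :=
  pd j (fun y => X y i) x + ∑ k, chr g x i k j * X x k

/-- Covariant derivative of a symmetric (0,2)-tensor: `h_{ij;k}`. -/
def cd2 {n : ℕ} (g : Pt n → Fin n → Fin n → ℝ) (h : Pt n → Fin n → Fin n → ℝ)
    (x : Pt n) (i j k : Fin n) : ℝ :=
  pd k (fun y => h y i j) x - ∑ l, chr g x l i k * h x l j - ∑ l, chr g x l j k * h x i l

/-- Second covariant derivative of a covector field: `X_{i;jk}`. -/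
def cdCov2 {n : ℕ} (g : Pt n → Fin n → Fin n → ℝ) (X : Pt n → Fin n → ℝ)
    (x : Pt n) (i j k : Fin n) : ℝ :=
  cd2 g (fun y a b => cdCov g X y a b) x i j k

/-- Riemann curvature tensor `R^l_{ijk}`. -/
def riem {n : ℕ} (g : Pt n → Fin n → Fin n → ℝ) (x : Pt n) (l i j k : Fin n) : ℝ :=
  pd j (fun y => chr g y l i k) x - pd k (fun y => chr g y l i j) x
  + ∑ m, chr g x l m j * chr g x m i k - ∑ m, chr g x l m k * chr g x m i j

/-- Riemann curvature with all indices lowered. -/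
def riemLow {n : ℕ} (g : Pt n → Fin n → Fin n → ℝ) (x : Pt n) (a b c d : Fin n) : ℝ :=
  ∑ l, g x a l * riem g x l b c d

/-- Ricci curvature `R_{ij}`. -/
def ric {n : ℕ} (g : Pt n → Fin n → Fin n → ℝ) (x : Pt n) (i j : Fin n) : ℝ :=
  ∑ l, riem g x l i l j

/-- Lower the index of a vector field using `g`. -/
def lowerV {n : ℕ} (g : Pt n → Fin n → Fin n → ℝ) (X : Pt n → Fin n → ℝ)
    (x : Pt n) (i : Fin n) : ℝ :=
  ∑ j, g x i j * X x j

/-- Lie derivative of the metric `g` along the vector field `X`: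
`(L_X g)_{ij} = X_{i;j} + X_{j;i}` (index lowered by `g`). -/
def lieg {n : ℕ} (g : Pt n → Fin n → Fin n → ℝ) (X : Pt n → Fin n → ℝ)
    (x : Pt n) (i j : Fin n) : ℝ :=
  cdCov g (lowerV g X) x i j + cdCov g (lowerV g X) x j i

/-- Hessian `f_{;ij}`. -/
def hess {n : ℕ} (g : Pt n → Fin n → Fin n → ℝ) (f : Pt n → ℝ)
    (x : Pt n) (i j : Fin n) : ℝ :=
  cdCov g (fun y a => pd a f y) x i j

/-- Laplace–Beltrami operator on functions. -/
def lapf {n : ℕ} (g : Pt n → Fin n → Fin n → ℝ) (f : Pt n → ℝ) (x : Pt n) : ℝ :=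
  ∑ i, ∑ j, ginv g x i j * hess g f x i j

/-- Trace of a (0,2)-tensor with respect to `g`. -/
def trT {n : ℕ} (g : Pt n → Fin n → Fin n → ℝ) (h : Pt n → Fin n → Fin n → ℝ)
    (x : Pt n) : ℝ :=
  ∑ i, ∑ j, ginv g x i j * h x i j

/-- Divergence of a (0,2)-tensor, as a covector. -/
def divT {n : ℕ} (g : Pt n → Fin n → Fin n → ℝ) (h : Pt n → Fin n → Fin n → ℝ)
    (x : Pt n) (i : Fin n) : ℝ :=
  ∑ j, ∑ k, ginv g x j k * cd2 g h x i j k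

/-- Bianchi operator `β_g h = -div_g h + (1/2) d (tr_g h)`. -/
def bianchi {n : ℕ} (g : Pt n → Fin n → Fin n → ℝ) (h : Pt n → Fin n → Fin n → ℝ)
    (x : Pt n) (i : Fin n) : ℝ :=
  -divT g h x i + (1/2) * pd i (fun y => trT g h y) x

/-- Gradient vector field `(∇f)^i`. -/
def gradV {n : ℕ} (g : Pt n → Fin n → Fin n → ℝ) (f : Pt n → ℝ)
    (x : Pt n) (i : Fin n) : ℝ :=
  ∑ j, ginv g x i j * pd j f x

/-- The tensor is symmetric. -/
def symT {n : ℕ} (g : Pt n → Fin n → Fin n → ℝ) : Prop :=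
  ∀ x i j, g x i j = g x j i

/-- `g` is pointwise positive definite. -/
def posdef {n : ℕ} (g : Pt n → Fin n → Fin n → ℝ) : Prop :=
  ∀ (x : Pt n) (v : Fin n → ℝ), v ≠ 0 → 0 < ∑ i, ∑ j, g x i j * v i * v j

/-- Smooth componentwise. -/
def smoothT {n : ℕ} (g : Pt n → Fin n → Fin n → ℝ) : Prop :=
  ∀ i j, ContDiff ℝ (⊤ : ℕ∞) (fun x => g x i j)

/-- The lowered tensor `(T_h)_{ijk} = (1/2)(h_{ij;k} + h_{ik;j} - h_{jk;i})`. -/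
def Tlow {n : ℕ} (g : Pt n → Fin n → Fin n → ℝ) (h : Pt n → Fin n → Fin n → ℝ)
    (x : Pt n) (i j k : Fin n) : ℝ :=
  (1/2) * (cd2 g h x i j k + cd2 g h x i k j - cd2 g h x j k i)

/-- The linearized gauge operator
`G'(h,v) = β_ḡ h + ū⁻¹ dv + ū⁻² v dū - ū⁻¹ h(∇ū,·)`. -/
def gaugeLin {n : ℕ} (g : Pt n → Fin n → Fin n → ℝ) (u : Pt n → ℝ)
    (h : Pt n → Fin n → Fin n → ℝ) (v : Pt n → ℝ) (x : Pt n) (i : Fin n) : ℝ :=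
  bianchi g h x i + (u x)⁻¹ * pd i v x + ((u x)^2)⁻¹ * v x * pd i u x
    - (u x)⁻¹ * ∑ j, ∑ k, h x i j * ginv g x j k * pd k u x

/-! ### Auxiliary development -/

section Aux

open Matrix

variable {n : ℕ}

lemma ContDiff.dAt {f : Pt n → ℝ} (h : ContDiff ℝ (⊤ : ℕ∞) f) {x : Pt n} :
    DifferentiableAt ℝ f x := (h.differentiable (by simp)).differentiableAt

lemma pd_const (i : Fin n) (c : ℝ) : pd i (fun _ => c) x = 0 := by
  unfold pd; rw [fderiv_fun_const]; simp

lemma pd_add {f h : Pt n → ℝ} {x : Pt n} (i : Fin n)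
    (hf : DifferentiableAt ℝ f x) (hh : DifferentiableAt ℝ h x) :
    pd i (fun y => f y + h y) x = pd i f x + pd i h x := by
  unfold pd; rw [fderiv_fun_add hf hh]; rfl

lemma pd_sub {f h : Pt n → ℝ} {x : Pt n} (i : Fin n)
    (hf : DifferentiableAt ℝ f x) (hh : DifferentiableAt ℝ h x) :
    pd i (fun y => f y - h y) x = pd i f x - pd i h x := by
  unfold pd; rw [fderiv_fun_sub hf hh]; rfl

lemma pd_sum {ι : Type*} (s : Finset ι) (f : ι → Pt n → ℝ) {x : Pt n} (i : Fin n)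
    (hf : ∀ j ∈ s, DifferentiableAt ℝ (f j) x) :
    pd i (fun y => ∑ j ∈ s, f j y) x = ∑ j ∈ s, pd i (f j) x := by
  unfold pd; rw [fderiv_fun_sum hf]; simp

lemma pd_mul {f h : Pt n → ℝ} {x : Pt n} (i : Fin n)
    (hf : DifferentiableAt ℝ f x) (hh : DifferentiableAt ℝ h x) :
    pd i (fun y => f y * h y) x = pd i f x * h x + f x * pd i h x := by
  unfold pd; rw [fderiv_fun_mul hf hh]; simp [mul_comm]; ring

lemma pd_const_mul {f : Pt n → ℝ} {x : Pt n} (i : Fin n) (c : ℝ)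
    (hf : DifferentiableAt ℝ f x) :
    pd i (fun y => c * f y) x = c * pd i f x := by
  unfold pd; rw [fderiv_const_mul hf]; rfl

lemma pd_comm {f : Pt n → ℝ} (hf : ContDiff ℝ (⊤ : ℕ∞) f) (x : Pt n) (i j : Fin n) :
    pd i (fun y => pd j f y) x = pd j (fun y => pd i f y) x := by
  have hd : ∀ y, HasFDerivAt f (fderiv ℝ f y) y := fun y =>
    (hf.differentiable (by simp) y).hasFDerivAt
  have hc : DifferentiableAt ℝ (fderiv ℝ f) x :=
    ((hf.fderiv_right (m := (⊤ : ℕ∞)) (by simp)).differentiable (by simp) x)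
  have key := second_derivative_symmetric hd hc.hasFDerivAt (Pi.single j 1) (Pi.single i 1)
  unfold pd
  have e1 : fderiv ℝ (fun y => fderiv ℝ f y (Pi.single j 1)) x (Pi.single i 1)
      = fderiv ℝ (fderiv ℝ f) x (Pi.single i 1) (Pi.single j 1) := by
    rw [fderiv_clm_apply hc (differentiableAt_const _)]; simp
  have e2 : fderiv ℝ (fun y => fderiv ℝ f y (Pi.single i 1)) x (Pi.single j 1)
      = fderiv ℝ (fderiv ℝ f) x (Pi.single j 1) (Pi.single i 1) := by
    rw [fderiv_clm_apply hc (differentiableAt_const _)]; simp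
  rw [e1, e2, key]

lemma contDiff_pd {f : Pt n → ℝ} (hf : ContDiff ℝ (⊤ : ℕ∞) f) (i : Fin n) :
    ContDiff ℝ (⊤ : ℕ∞) (fun x => pd i f x) := by
  have h1 : ContDiff ℝ (⊤ : ℕ∞) (fderiv ℝ f) := hf.fderiv_right (m := (⊤ : ℕ∞)) (by simp)
  exact (ContinuousLinearMap.apply ℝ ℝ (Pi.single i (1:ℝ))).contDiff.comp h1

variable {g : Pt n → Fin n → Fin n → ℝ}

lemma gfun_symm (hs : symT g) (i j : Fin n) :
    (fun y => g y i j) = (fun y => g y j i) := by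
  funext y; exact hs y i j

lemma posdefMat (hs : symT g) (hp : posdef g) (x : Pt n) : (Matrix.of (g x)).PosDef := by
  refine Matrix.PosDef.of_dotProduct_mulVec_pos ?_ ?_
  · ext i j
    simp [Matrix.conjTranspose_apply, hs x i j]
  · intro v hv
    have := hp x v hv
    simpa [dotProduct, Matrix.mulVec, Finset.mul_sum, mul_comm,
      mul_left_comm, mul_assoc] using this

lemma det_ne (hs : symT g) (hp : posdef g) (x : Pt n) : (Matrix.of (g x)).det ≠ 0 :=
  (posdefMat hs hp x).det_pos.ne'

lemma isUnit_detg (hs : symT g) (hp : posdef g) (x : Pt n) : IsUnit (Matrix.of (g x)).det :=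
  (det_ne hs hp x).isUnit

lemma ginv_mul (hs : symT g) (hp : posdef g) (x : Pt n) (i j : Fin n) :
    ∑ k, ginv g x i k * g x k j = if i = j then 1 else 0 := by
  have h := Matrix.nonsing_inv_mul (Matrix.of (g x)) (isUnit_detg hs hp x)
  have := congrFun (congrFun h i) j
  simpa [Matrix.mul_apply, Matrix.one_apply, ginv] using this

lemma mul_ginv (hs : symT g) (hp : posdef g) (x : Pt n) (i j : Fin n) :
    ∑ k, g x i k * ginv g x k j = if i = j then 1 else 0 := by
  have h := Matrix.mul_nonsing_inv (Matrix.of (g x)) (isUnit_detg hs hp x)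
  have := congrFun (congrFun h i) j
  simpa [Matrix.mul_apply, Matrix.one_apply, ginv] using this

lemma ginv_symm (hs : symT g) (x : Pt n) (i j : Fin n) :
    ginv g x i j = ginv g x j i := by
  have ht : (Matrix.of (g x))ᵀ = Matrix.of (g x) := by
    ext i j; simp [Matrix.transpose_apply, hs x j i]
  have h2 := Matrix.transpose_nonsing_inv (Matrix.of (g x))
  unfold ginv
  calc (Matrix.of (g x))⁻¹ i j = ((Matrix.of (g x))⁻¹)ᵀ j i := rfl
    _ = ((Matrix.of (g x))ᵀ)⁻¹ j i := by rw [h2]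
    _ = (Matrix.of (g x))⁻¹ j i := by rw [ht]

lemma contDiff_detM {m : ℕ} (M : Pt n → Matrix (Fin m) (Fin m) ℝ)
    (h : ∀ i j, ContDiff ℝ (⊤ : ℕ∞) fun x => M x i j) :
    ContDiff ℝ (⊤ : ℕ∞) fun x => (M x).det := by
  simp only [Matrix.det_apply, Units.smul_def, zsmul_eq_mul]
  apply ContDiff.sum
  intro σ _
  exact (contDiff_const.mul (contDiff_prod fun i _ => h (σ i) i))

lemma contDiff_ginv (hs : symT g) (hp : posdef g) (hsm : smoothT g) (i j : Fin n) :
    ContDiff ℝ (⊤ : ℕ∞) fun x => ginv g x i j := by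
  have hdet : ContDiff ℝ (⊤ : ℕ∞) fun x => (Matrix.of (g x)).det :=
    contDiff_detM _ (fun i j => hsm i j)
  have hadj : ContDiff ℝ (⊤ : ℕ∞) fun x => (Matrix.of (g x)).adjugate i j := by
    simp only [Matrix.adjugate_apply]
    apply contDiff_detM
    intro a b
    rcases eq_or_ne a j with rfl | hne
    · simpa [Matrix.updateRow_apply] using contDiff_const
    · simpa [Matrix.updateRow_apply, hne] using hsm a b
  have e : (fun x => ginv g x i j)
      = fun x => ((Matrix.of (g x)).det)⁻¹ * (Matrix.of (g x)).adjugate i j := by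
    funext x
    rw [ginv, Matrix.inv_def]
    simp [Matrix.smul_apply, Ring.inverse_eq_inv', smul_eq_mul]
  rw [e]
  exact (hdet.inv fun x => det_ne hs hp x).mul hadj

lemma sm_chr (hs : symT g) (hp : posdef g) (hsm : smoothT g) (k i j : Fin n) :
    ContDiff ℝ (⊤ : ℕ∞) fun x => chr g x k i j := by
  unfold chr
  apply contDiff_const.mul
  apply ContDiff.sum
  intro l _
  exact (contDiff_ginv hs hp hsm k l).mul
    (((contDiff_pd (hsm j l) i).add (contDiff_pd (hsm i l) j)).sub (contDiff_pd (hsm i j) l))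

variable {X : Pt n → Fin n → ℝ}

lemma sm_lowerV (hsm : smoothT g) (hX : ∀ i, ContDiff ℝ (⊤ : ℕ∞) (fun x => X x i)) (i : Fin n) :
    ContDiff ℝ (⊤ : ℕ∞) fun x => lowerV g X x i := by
  unfold lowerV
  exact ContDiff.sum fun j _ => (hsm i j).mul (hX j)

lemma sm_cdCov (hs : symT g) (hp : posdef g) (hsm : smoothT g)
    {W : Pt n → Fin n → ℝ} (hW : ∀ i, ContDiff ℝ (⊤ : ℕ∞) (fun x => W x i)) (i j : Fin n) :
    ContDiff ℝ (⊤ : ℕ∞) fun x => cdCov g W x i j := by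
  unfold cdCov
  exact (contDiff_pd (hW i) j).sub
    (ContDiff.sum fun k _ => (sm_chr hs hp hsm k i j).mul (hW k))

end Aux


section Aux2
variable {n : ℕ} {g : Pt n → Fin n → Fin n → ℝ} {X : Pt n → Fin n → ℝ}

lemma chr_symm (hs : symT g) (x : Pt n) (k i j : Fin n) :
    chr g x k i j = chr g x k j i := by
  unfold chr
  congr 1
  apply Finset.sum_congr rfl
  intro l _
  rw [gfun_symm hs i j]
  ring

lemma chr_low (hs : symT g) (hp : posdef g) (x : Pt n) (m i j : Fin n) :
    ∑ k, g x m k * chr g x k i j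
      = (1/2) * (pd i (fun y => g y j m) x + pd j (fun y => g y i m) x
          - pd m (fun y => g y i j) x) := by
  unfold chr
  calc ∑ k, g x m k * ((1/2) * ∑ l, ginv g x k l *
        (pd i (fun y => g y j l) x + pd j (fun y => g y i l) x - pd l (fun y => g y i j) x))
      = ∑ l, (∑ k, g x m k * ginv g x k l) * ((1/2) *
        (pd i (fun y => g y j l) x + pd j (fun y => g y i l) x - pd l (fun y => g y i j) x)) := by
        simp only [Finset.mul_sum, Finset.sum_mul]
        rw [Finset.sum_comm]
        exact Finset.sum_congr rfl fun l _ => Finset.sum_congr rfl fun k _ => by ring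
    _ = ∑ l, (if m = l then (1:ℝ) else 0) * ((1/2) *
        (pd i (fun y => g y j l) x + pd j (fun y => g y i l) x - pd l (fun y => g y i j) x)) := by
        exact Finset.sum_congr rfl fun l _ => by rw [mul_ginv hs hp]
    _ = _ := by simp

lemma pd_g (hs : symT g) (hp : posdef g) (x : Pt n) (i j k : Fin n) :
    pd k (fun y => g y i j) x
      = (∑ l, chr g x l i k * g x l j) + ∑ l, chr g x l j k * g x i l := by
  have h1 : ∑ l, chr g x l i k * g x l j = ∑ l, g x j l * chr g x l i k :=
    Finset.sum_congr rfl fun l _ => by rw [hs x l j]; ring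
  have h2 : ∑ l, chr g x l j k * g x i l = ∑ l, g x i l * chr g x l j k :=
    Finset.sum_congr rfl fun l _ => by ring
  rw [h1, h2, chr_low hs hp x j i k, chr_low hs hp x i j k,
    gfun_symm hs k j, gfun_symm hs k i, gfun_symm hs j i]
  ring

lemma contract_gginv (hs : symT g) (hp : posdef g) (x : Pt n) (f : Fin n → ℝ) (c : Fin n) :
    ∑ b, ∑ m, f m * g x m b * ginv g x b c = f c := by
  rw [Finset.sum_comm]
  calc ∑ m, ∑ b, f m * g x m b * ginv g x b c
      = ∑ m, f m * ∑ b, g x m b * ginv g x b c := by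
        exact Finset.sum_congr rfl fun m _ => by rw [Finset.mul_sum]; exact Finset.sum_congr rfl fun b _ => by ring
    _ = ∑ m, f m * (if m = c then 1 else 0) := by
        exact Finset.sum_congr rfl fun m _ => by rw [mul_ginv hs hp]
    _ = f c := by simp

lemma contract_ginvg (hs : symT g) (hp : posdef g) (x : Pt n) (f : Fin n → ℝ) (c : Fin n) :
    ∑ b, ∑ m, f m * ginv g x m b * g x b c = f c := by
  rw [Finset.sum_comm]
  calc ∑ m, ∑ b, f m * ginv g x m b * g x b c
      = ∑ m, f m * ∑ b, ginv g x m b * g x b c := by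
        exact Finset.sum_congr rfl fun m _ => by rw [Finset.mul_sum]; exact Finset.sum_congr rfl fun b _ => by ring
    _ = ∑ m, f m * (if m = c then 1 else 0) := by
        exact Finset.sum_congr rfl fun m _ => by rw [ginv_mul hs hp]
    _ = f c := by simp

lemma pd_ginv (hs : symT g) (hp : posdef g) (hsm : smoothT g) (x : Pt n) (i a c : Fin n) :
    pd i (fun y => ginv g y a c) x
      = -(∑ m, chr g x c m i * ginv g x a m) - ∑ m, chr g x a m i * ginv g x m c := by
  have hdg : ∀ b d, DifferentiableAt ℝ (fun y => g y b d) x := fun b d => (hsm b d).dAt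
  have hdgi : ∀ b d, DifferentiableAt ℝ (fun y => ginv g y b d) x :=
    fun b d => (contDiff_ginv hs hp hsm b d).dAt
  -- differentiated inverse identity
  have step1 : ∀ b, ∑ m, (pd i (fun y => ginv g y a m) x * g x m b
      + ginv g x a m * pd i (fun y => g y m b) x) = 0 := by
    intro b
    have hconst : (fun y => ∑ m, ginv g y a m * g y m b) = fun _ => (if a = b then (1:ℝ) else 0) :=
      funext fun y => ginv_mul hs hp y a b
    have h0 : pd i (fun y => ∑ m, ginv g y a m * g y m b) x = 0 := by
      rw [hconst, pd_const]
    rw [pd_sum Finset.univ (fun m => fun y => ginv g y a m * g y m b) i (fun m _ => (hdgi a m).mul (hdg m b))] at h0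
    calc ∑ m, (pd i (fun y => ginv g y a m) x * g x m b
          + ginv g x a m * pd i (fun y => g y m b) x)
        = ∑ m, pd i (fun y => ginv g y a m * g y m b) x := by
          exact Finset.sum_congr rfl fun m _ => (pd_mul i (hdgi a m) (hdg m b)).symm
      _ = 0 := h0
  -- express pd of ginv via contraction
  have step2 : pd i (fun y => ginv g y a c) x
      = ∑ b, ∑ m, pd i (fun y => ginv g y a m) x * g x m b * ginv g x b c :=
    (contract_gginv hs hp x (fun m => pd i (fun y => ginv g y a m) x) c).symm
  rw [step2]
  have step3 : ∀ b, ∑ m, pd i (fun y => ginv g y a m) x * g x m b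
      = -∑ m, ginv g x a m * pd i (fun y => g y m b) x := by
    intro b
    have := step1 b
    rw [Finset.sum_add_distrib] at this
    linarith
  calc ∑ b, ∑ m, pd i (fun y => ginv g y a m) x * g x m b * ginv g x b c
      = ∑ b, (∑ m, pd i (fun y => ginv g y a m) x * g x m b) * ginv g x b c := by
        exact Finset.sum_congr rfl fun b _ => by rw [Finset.sum_mul]
    _ = ∑ b, (-∑ m, ginv g x a m * pd i (fun y => g y m b) x) * ginv g x b c := by
        exact Finset.sum_congr rfl fun b _ => by rw [step3 b]
    _ = -∑ b, ∑ m, ginv g x a m * pd i (fun y => g y m b) x * ginv g x b c := by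
        rw [← Finset.sum_neg_distrib]
        exact Finset.sum_congr rfl fun b _ => by rw [neg_mul, Finset.sum_mul]
    _ = -(∑ m, chr g x c m i * ginv g x a m) - ∑ m, chr g x a m i * ginv g x m c := by
        have expand : ∀ b m, ginv g x a m * pd i (fun y => g y m b) x * ginv g x b c
            = (∑ l, ginv g x a m * chr g x l m i * g x l b * ginv g x b c)
              + ∑ l, ginv g x a m * chr g x l b i * g x m l * ginv g x b c := by
          intro b m
          rw [pd_g hs hp x m b i]
          rw [mul_add, add_mul, Finset.mul_sum, Finset.sum_mul, Finset.mul_sum, Finset.sum_mul]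
          congr 1
          · exact Finset.sum_congr rfl fun l _ => by ring
          · exact Finset.sum_congr rfl fun l _ => by ring
        have split : ∑ b, ∑ m, ginv g x a m * pd i (fun y => g y m b) x * ginv g x b c
            = (∑ b, ∑ m, ∑ l, ginv g x a m * chr g x l m i * g x l b * ginv g x b c)
              + ∑ b, ∑ m, ∑ l, ginv g x a m * chr g x l b i * g x m l * ginv g x b c := by
          rw [← Finset.sum_add_distrib]
          refine Finset.sum_congr rfl fun b _ => ?_
          rw [← Finset.sum_add_distrib]
          exact Finset.sum_congr rfl fun m _ => expand b m
        have T1 : ∑ b, ∑ m, ∑ l, ginv g x a m * chr g x l m i * g x l b * ginv g x b c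
            = ∑ m, chr g x c m i * ginv g x a m := by
          calc ∑ b, ∑ m, ∑ l, ginv g x a m * chr g x l m i * g x l b * ginv g x b c
              = ∑ b, ∑ l, (∑ m, ginv g x a m * chr g x l m i) * g x l b * ginv g x b c := by
                refine Finset.sum_congr rfl fun b _ => ?_
                rw [Finset.sum_comm]
                refine Finset.sum_congr rfl fun l _ => ?_
                rw [Finset.sum_mul, Finset.sum_mul]
            _ = ∑ m, ginv g x a m * chr g x c m i := contract_gginv hs hp x _ c
            _ = ∑ m, chr g x c m i * ginv g x a m :=
                Finset.sum_congr rfl fun m _ => mul_comm _ _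
        have T2 : ∑ b, ∑ m, ∑ l, ginv g x a m * chr g x l b i * g x m l * ginv g x b c
            = ∑ m, chr g x a m i * ginv g x m c := by
          calc ∑ b, ∑ m, ∑ l, ginv g x a m * chr g x l b i * g x m l * ginv g x b c
              = ∑ b, (∑ l, chr g x l b i * (∑ m, ginv g x a m * g x m l)) * ginv g x b c := by
                refine Finset.sum_congr rfl fun b _ => ?_
                rw [Finset.sum_comm, Finset.sum_mul]
                refine Finset.sum_congr rfl fun l _ => ?_
                rw [Finset.mul_sum, Finset.sum_mul]
                exact Finset.sum_congr rfl fun m _ => by ring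
            _ = ∑ b, (∑ l, chr g x l b i * (if a = l then (1:ℝ) else 0)) * ginv g x b c := by
                refine Finset.sum_congr rfl fun b _ => ?_
                congr 1
                exact Finset.sum_congr rfl fun l _ => by rw [ginv_mul hs hp]
            _ = ∑ b, chr g x a b i * ginv g x b c := by simp
        rw [split, T1, T2]
        ring

end Aux2


section Aux3
variable {n : ℕ} {g : Pt n → Fin n → Fin n → ℝ} {X : Pt n → Fin n → ℝ} {u : Pt n → ℝ}

lemma cdCov_lowerV (hs : symT g) (hp : posdef g) (hsm : smoothT g)
    (hX : ∀ i, ContDiff ℝ (⊤ : ℕ∞) (fun x => X x i)) (x : Pt n) (a i : Fin n) :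
    cdCov g (lowerV g X) x a i = ∑ m, g x a m * cdVec g X x m i := by
  simp only [cdCov, lowerV, cdVec]
  have hpd : pd i (fun y => ∑ m, g y a m * X y m) x
      = ∑ m, (((∑ l, chr g x l a i * g x l m) + ∑ l, chr g x l m i * g x a l) * X x m
          + g x a m * pd i (fun y => X y m) x) := by
    rw [pd_sum Finset.univ (fun m => fun y => g y a m * X y m) i
      (fun m _ => ((hsm a m).mul (hX m)).dAt)]
    refine Finset.sum_congr rfl fun m _ => ?_
    rw [pd_mul i (hsm a m).dAt (hX m).dAt, pd_g hs hp x a m i]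
  rw [hpd, Finset.sum_add_distrib]
  have e1 : ∑ m, ((∑ l, chr g x l a i * g x l m) + ∑ l, chr g x l m i * g x a l) * X x m
      = (∑ m, ∑ l, chr g x l a i * g x l m * X x m)
        + ∑ m, ∑ l, chr g x l m i * g x a l * X x m := by
    rw [← Finset.sum_add_distrib]
    refine Finset.sum_congr rfl fun m _ => ?_
    rw [add_mul, Finset.sum_mul, Finset.sum_mul]
  rw [e1]
  have e2 : ∑ k, chr g x k a i * ∑ j, g x k j * X x j
      = ∑ m, ∑ l, chr g x l a i * g x l m * X x m := by
    rw [Finset.sum_comm]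
    refine Finset.sum_congr rfl fun k _ => ?_
    rw [Finset.mul_sum]
    exact Finset.sum_congr rfl fun m _ => by ring
  rw [e2]
  have e3 : ∑ m, g x a m * (pd i (fun y => X y m) x + ∑ k, chr g x m k i * X x k)
      = (∑ m, g x a m * pd i (fun y => X y m) x)
        + ∑ m, ∑ l, chr g x l m i * g x a l * X x m := by
    simp only [mul_add]
    rw [Finset.sum_add_distrib]
    congr 1
    simp only [Finset.mul_sum]
    conv_rhs => rw [Finset.sum_comm]
    exact Finset.sum_congr rfl fun m _ => Finset.sum_congr rfl fun l _ => by ring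
  rw [e3]
  ring

lemma lemA (hs : symT g) (hp : posdef g) (hsm : smoothT g) (husm : ContDiff ℝ (⊤ : ℕ∞) u)
    (hX : ∀ i, ContDiff ℝ (⊤ : ℕ∞) (fun x => X x i)) (x : Pt n) (i : Fin n) :
    pd i (fun y => ∑ j, X y j * pd j u y) x
      = (∑ j, cdVec g X x j i * pd j u x) + ∑ j, X x j * hess g u x j i := by
  rw [pd_sum Finset.univ (fun j => fun y => X y j * pd j u y) i
    (fun j _ => ((hX j).mul (contDiff_pd husm j)).dAt)]
  have e0 : ∀ j, pd i (fun y => X y j * pd j u y) x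
      = pd i (fun y => X y j) x * pd j u x + X x j * pd i (fun y => pd j u y) x :=
    fun j => pd_mul i (hX j).dAt (contDiff_pd husm j).dAt
  simp only [e0, cdVec, hess, cdCov]
  rw [Finset.sum_add_distrib]
  have e1 : ∑ j, (pd i (fun y => X y j) x + ∑ k, chr g x j k i * X x k) * pd j u x
      = (∑ j, pd i (fun y => X y j) x * pd j u x)
        + ∑ j, ∑ k, chr g x j k i * X x k * pd j u x := by
    rw [← Finset.sum_add_distrib]
    refine Finset.sum_congr rfl fun j _ => ?_
    rw [add_mul, Finset.sum_mul]
  have e2 : ∑ j, X x j * (pd i (fun y => pd j u y) x - ∑ k, chr g x k j i * pd k u x)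
      = (∑ j, X x j * pd i (fun y => pd j u y) x)
        - ∑ j, ∑ k, X x j * (chr g x k j i * pd k u x) := by
    rw [← Finset.sum_sub_distrib]
    refine Finset.sum_congr rfl fun j _ => ?_
    rw [mul_sub, Finset.mul_sum]
  rw [e1, e2]
  have e3 : ∑ j, ∑ k, chr g x j k i * X x k * pd j u x
      = ∑ j, ∑ k, X x j * (chr g x k j i * pd k u x) := by
    rw [Finset.sum_comm]
    exact Finset.sum_congr rfl fun j _ => Finset.sum_congr rfl fun k _ => by ring
  rw [e3]
  ring

lemma raise (hs : symT g) (hp : posdef g) (hsm : smoothT g)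
    (hX : ∀ i, ContDiff ℝ (⊤ : ℕ∞) (fun x => X x i)) (x : Pt n) (i : Fin n) :
    ∑ j, ∑ k, ginv g x j k * pd k u x * cdCov g (lowerV g X) x j i
      = ∑ j, cdVec g X x j i * pd j u x := by
  have e0 : ∀ j k, ginv g x j k * pd k u x * cdCov g (lowerV g X) x j i
      = ∑ m, g x m j * ginv g x j k * (pd k u x * cdVec g X x m i) := by
    intro j k
    rw [cdCov_lowerV hs hp hsm hX x j i, Finset.mul_sum]
    refine Finset.sum_congr rfl fun m _ => ?_
    rw [hs x m j]
    ring
  simp only [e0]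
  rw [Finset.sum_comm]
  calc ∑ k, ∑ j, ∑ m, g x m j * ginv g x j k * (pd k u x * cdVec g X x m i)
      = ∑ k, ∑ m, (∑ j, g x m j * ginv g x j k) * (pd k u x * cdVec g X x m i) := by
        refine Finset.sum_congr rfl fun k _ => ?_
        rw [Finset.sum_comm]
        exact Finset.sum_congr rfl fun m _ => by rw [Finset.sum_mul]
    _ = ∑ k, ∑ m, (if m = k then (1:ℝ) else 0) * (pd k u x * cdVec g X x m i) := by
        exact Finset.sum_congr rfl fun k _ => Finset.sum_congr rfl fun m _ => by
          rw [mul_ginv hs hp]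
    _ = ∑ k, pd k u x * cdVec g X x k i := by simp
    _ = ∑ j, cdVec g X x j i * pd j u x := Finset.sum_congr rfl fun j _ => by ring

end Aux3


section Aux4
variable {n : ℕ} {g : Pt n → Fin n → Fin n → ℝ} {X : Pt n → Fin n → ℝ}

lemma sm_lieg (hs : symT g) (hp : posdef g) (hsm : smoothT g)
    (hX : ∀ i, ContDiff ℝ (⊤ : ℕ∞) (fun x => X x i)) (i j : Fin n) :
    ContDiff ℝ (⊤ : ℕ∞) fun x => lieg g X x i j := by
  unfold lieg
  exact (sm_cdCov hs hp hsm (sm_lowerV hsm hX) i j).add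
    (sm_cdCov hs hp hsm (sm_lowerV hsm hX) j i)

lemma cd2_lieg (hs : symT g) (hp : posdef g) (hsm : smoothT g)
    (hX : ∀ i, ContDiff ℝ (⊤ : ℕ∞) (fun x => X x i)) (x : Pt n) (i j k : Fin n) :
    cd2 g (lieg g X) x i j k
      = cdCov2 g (lowerV g X) x i j k + cdCov2 g (lowerV g X) x j i k := by
  have hY := sm_lowerV hsm hX
  have hT : ∀ a b, ContDiff ℝ (⊤ : ℕ∞) fun x => cdCov g (lowerV g X) x a b :=
    sm_cdCov hs hp hsm hY
  simp only [cd2, cdCov2, lieg]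
  rw [pd_add k (hT i j).dAt (hT j i).dAt]
  have s1 : ∑ l, chr g x l i k * (cdCov g (lowerV g X) x l j + cdCov g (lowerV g X) x j l)
      = (∑ l, chr g x l i k * cdCov g (lowerV g X) x l j)
        + ∑ l, chr g x l i k * cdCov g (lowerV g X) x j l := by
    rw [← Finset.sum_add_distrib]
    exact Finset.sum_congr rfl fun l _ => by ring
  have s2 : ∑ l, chr g x l j k * (cdCov g (lowerV g X) x i l + cdCov g (lowerV g X) x l i)
      = (∑ l, chr g x l j k * cdCov g (lowerV g X) x i l)
        + ∑ l, chr g x l j k * cdCov g (lowerV g X) x l i := by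
    rw [← Finset.sum_add_distrib]
    exact Finset.sum_congr rfl fun l _ => by ring
  rw [s1, s2]
  ring

lemma divT_lieg (hs : symT g) (hp : posdef g) (hsm : smoothT g)
    (hX : ∀ i, ContDiff ℝ (⊤ : ℕ∞) (fun x => X x i)) (x : Pt n) (i : Fin n) :
    divT g (lieg g X) x i
      = (∑ j, ∑ k, ginv g x j k * cdCov2 g (lowerV g X) x i j k)
        + ∑ j, ∑ k, ginv g x j k * cdCov2 g (lowerV g X) x j i k := by
  unfold divT
  rw [← Finset.sum_add_distrib]
  refine Finset.sum_congr rfl fun j _ => ?_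
  rw [← Finset.sum_add_distrib]
  refine Finset.sum_congr rfl fun k _ => ?_
  rw [cd2_lieg hs hp hsm hX x i j k]
  ring

lemma trace_pd (hs : symT g) (hp : posdef g) (hsm : smoothT g)
    {S : Pt n → Fin n → Fin n → ℝ} (hS : ∀ a b, ContDiff ℝ (⊤ : ℕ∞) fun x => S x a b)
    (x : Pt n) (i : Fin n) :
    pd i (fun y => ∑ a, ∑ b, ginv g y a b * S y a b) x
      = ∑ a, ∑ b, ginv g x a b * cd2 g S x a b i := by
  have h1 : pd i (fun y => ∑ a, ∑ b, ginv g y a b * S y a b) x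
      = ∑ a, ∑ b, (pd i (fun y => ginv g y a b) x * S x a b
          + ginv g x a b * pd i (fun y => S y a b) x) := by
    rw [pd_sum Finset.univ (fun a => fun y => ∑ b, ginv g y a b * S y a b) i
      (fun a _ => (ContDiff.sum fun b _ => (contDiff_ginv hs hp hsm a b).mul (hS a b)).dAt)]
    refine Finset.sum_congr rfl fun a _ => ?_
    rw [pd_sum Finset.univ (fun b => fun y => ginv g y a b * S y a b) i
      (fun b _ => ((contDiff_ginv hs hp hsm a b).mul (hS a b)).dAt)]
    exact Finset.sum_congr rfl fun b _ =>
      pd_mul i (contDiff_ginv hs hp hsm a b).dAt (hS a b).dAt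
  rw [h1]
  simp only [cd2]
  -- split both sides
  have h2 : ∀ a b, pd i (fun y => ginv g y a b) x * S x a b
      + ginv g x a b * pd i (fun y => S y a b) x
      = ginv g x a b * pd i (fun y => S y a b) x
        - (∑ m, chr g x b m i * ginv g x a m * S x a b)
        - ∑ m, chr g x a m i * ginv g x m b * S x a b := by
    intro a b
    rw [pd_ginv hs hp hsm x i a b, sub_mul, neg_mul, Finset.sum_mul, Finset.sum_mul]
    simp only [mul_assoc]
    ring
  simp only [h2]
  have h3 : ∀ a b, ginv g x a b * (pd i (fun y => S y a b) x
        - (∑ l, chr g x l a i * S x l b) - ∑ l, chr g x l b i * S x a l)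
      = ginv g x a b * pd i (fun y => S y a b) x
        - (∑ l, ginv g x a b * chr g x l a i * S x l b)
        - ∑ l, ginv g x a b * chr g x l b i * S x a l := by
    intro a b
    rw [mul_sub, mul_sub, Finset.mul_sum, Finset.mul_sum]
    simp only [mul_assoc]
  simp only [h3]
  simp only [Finset.sum_sub_distrib]
  have hBC : ∑ a, ∑ b, ∑ m, chr g x b m i * ginv g x a m * S x a b
      = ∑ a, ∑ b, ∑ l, ginv g x a b * chr g x l b i * S x a l := by
    refine Finset.sum_congr rfl fun a _ => ?_
    rw [Finset.sum_comm]
    exact Finset.sum_congr rfl fun b _ => Finset.sum_congr rfl fun l _ => by ring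
  have hCB : ∑ a, ∑ b, ∑ m, chr g x a m i * ginv g x m b * S x a b
      = ∑ a, ∑ b, ∑ l, ginv g x a b * chr g x l a i * S x l b := by
    calc ∑ a, ∑ b, ∑ m, chr g x a m i * ginv g x m b * S x a b
        = ∑ a, ∑ m, ∑ b, chr g x a m i * ginv g x m b * S x a b :=
          Finset.sum_congr rfl fun a _ => Finset.sum_comm
      _ = ∑ m, ∑ a, ∑ b, chr g x a m i * ginv g x m b * S x a b := Finset.sum_comm
      _ = ∑ a, ∑ b, ∑ l, ginv g x a b * chr g x l a i * S x l b := by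
          refine Finset.sum_congr rfl fun a _ => ?_
          rw [Finset.sum_comm]
          exact Finset.sum_congr rfl fun b _ => Finset.sum_congr rfl fun l _ => by ring
  rw [hBC, hCB]
  ring

end Aux4


section Aux5
variable {n : ℕ} {g : Pt n → Fin n → Fin n → ℝ} {X : Pt n → Fin n → ℝ}

lemma trT_lieg_pd (hs : symT g) (hp : posdef g) (hsm : smoothT g)
    (hX : ∀ i, ContDiff ℝ (⊤ : ℕ∞) (fun x => X x i)) (x : Pt n) (i : Fin n) :
    (1/2) * pd i (fun y => trT g (lieg g X) y) x
      = ∑ j, ∑ k, ginv g x j k * cdCov2 g (lowerV g X) x j k i := by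
  have h0 : (fun y => trT g (lieg g X) y)
      = fun y => ∑ a, ∑ b, ginv g y a b * lieg g X y a b := rfl
  rw [h0, trace_pd hs hp hsm (fun a b => sm_lieg hs hp hsm hX a b) x i]
  have h1 : ∀ a b, ginv g x a b * cd2 g (lieg g X) x a b i
      = ginv g x a b * cdCov2 g (lowerV g X) x a b i
        + ginv g x a b * cdCov2 g (lowerV g X) x b a i := by
    intro a b
    rw [cd2_lieg hs hp hsm hX x a b i]
    ring
  simp only [h1]
  simp only [Finset.sum_add_distrib]
  have h2 : ∑ a, ∑ b, ginv g x a b * cdCov2 g (lowerV g X) x b a i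
      = ∑ a, ∑ b, ginv g x a b * cdCov2 g (lowerV g X) x a b i := by
    rw [Finset.sum_comm]
    exact Finset.sum_congr rfl fun a _ => Finset.sum_congr rfl fun b _ => by
      rw [ginv_symm hs]
  rw [h2]
  ring

lemma comm2 (hs : symT g) (hp : posdef g) (hsm : smoothT g)
    {W : Pt n → Fin n → ℝ} (hW : ∀ i, ContDiff ℝ (⊤ : ℕ∞) fun x => W x i)
    (x : Pt n) (j k i : Fin n) :
    cdCov2 g W x j k i - cdCov2 g W x j i k = ∑ m, riem g x m j k i * W x m := by
  have hchr := sm_chr hs hp hsm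
  have hpd1 : ∀ (k i : Fin n),
      pd i (fun y => pd k (fun z => W z j) y - ∑ m, chr g y m j k * W y m) x
      = pd i (fun y => pd k (fun z => W z j) y) x
        - ((∑ m, pd i (fun y => chr g y m j k) x * W x m)
          + ∑ m, chr g x m j k * pd i (fun y => W y m) x) := by
    intro k i
    rw [pd_sub i (contDiff_pd (hW j) k).dAt
      (ContDiff.sum fun m _ => (hchr m j k).mul (hW m)).dAt]
    congr 1
    rw [pd_sum Finset.univ (fun m => fun y => chr g y m j k * W y m) i
      (fun m _ => ((hchr m j k).mul (hW m)).dAt)]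
    rw [← Finset.sum_add_distrib]
    exact Finset.sum_congr rfl fun m _ =>
      pd_mul i (hchr m j k).dAt (hW m).dAt
  simp only [cdCov2, cd2, cdCov]
  rw [hpd1 k i, hpd1 i k]
  -- cancel the T_{jl} terms via chr symmetry
  have hD : ∑ l, chr g x l k i * (pd l (fun y => W y j) x - ∑ m, chr g x m j l * W x m)
      = ∑ l, chr g x l i k * (pd l (fun y => W y j) x - ∑ m, chr g x m j l * W x m) :=
    Finset.sum_congr rfl fun l _ => by rw [chr_symm hs x l k i]
  rw [hD]
  have hC : ∀ (k i : Fin n),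
      ∑ l, chr g x l j i * (pd k (fun y => W y l) x - ∑ m, chr g x m l k * W x m)
      = (∑ l, chr g x l j i * pd k (fun y => W y l) x)
        - ∑ l, ∑ m, chr g x l j i * (chr g x m l k * W x m) := by
    intro k i
    rw [← Finset.sum_sub_distrib]
    refine Finset.sum_congr rfl fun l _ => ?_
    rw [mul_sub, Finset.mul_sum]
  rw [hC k i, hC i k]
  rw [pd_comm (hW j) x i k]
  -- right-hand side expansion
  have hR : ∑ m, riem g x m j k i * W x m
      = ((∑ m, pd k (fun y => chr g y m j i) x * W x m)
          - ∑ m, pd i (fun y => chr g y m j k) x * W x m)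
        + ((∑ m, ∑ l, chr g x m l k * (chr g x l j i * W x m))
          - ∑ m, ∑ l, chr g x m l i * (chr g x l j k * W x m)) := by
    have e : ∀ m, riem g x m j k i * W x m
        = (pd k (fun y => chr g y m j i) x * W x m
            - pd i (fun y => chr g y m j k) x * W x m)
          + ((∑ l, chr g x m l k * (chr g x l j i * W x m))
            - ∑ l, chr g x m l i * (chr g x l j k * W x m)) := by
      intro m
      simp only [riem]
      rw [sub_mul, add_mul, sub_mul, Finset.sum_mul, Finset.sum_mul]
      simp only [mul_assoc]
      ring
    rw [Finset.sum_congr rfl fun m _ => e m]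
    rw [Finset.sum_add_distrib, Finset.sum_sub_distrib, Finset.sum_sub_distrib]
  rw [hR]
  -- swap the double sums
  have sw : ∀ (k i : Fin n),
      ∑ l, ∑ m, chr g x l j i * (chr g x m l k * W x m)
      = ∑ m, ∑ l, chr g x m l k * (chr g x l j i * W x m) := by
    intro k i
    rw [Finset.sum_comm]
    exact Finset.sum_congr rfl fun m _ => Finset.sum_congr rfl fun l _ => by ring
  rw [sw k i, sw i k]
  ring

end Aux5


section Aux6
variable {n : ℕ} {g : Pt n → Fin n → Fin n → ℝ}

lemma pd_chr_low (hs : symT g) (hp : posdef g) (hsm : smoothT g)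
    (x : Pt n) (a b c d : Fin n) :
    pd c (fun y => ∑ l, g y a l * chr g y l b d) x
      = (1/2) * (pd c (fun y => pd b (fun z => g z d a) y) x
          + pd c (fun y => pd d (fun z => g z b a) y) x
          - pd c (fun y => pd a (fun z => g z b d) y) x) := by
  have h0 : (fun y => ∑ l, g y a l * chr g y l b d)
      = fun y => (1/2) * (pd b (fun z => g z d a) y + pd d (fun z => g z b a) y
          - pd a (fun z => g z b d) y) := by
    funext y
    exact chr_low hs hp y a b d
  rw [h0]
  rw [pd_const_mul c _ ((((contDiff_pd (hsm d a) b).add (contDiff_pd (hsm b a) d)).sub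
    (contDiff_pd (hsm b d) a)).dAt)]
  congr 1
  rw [pd_sub c (((contDiff_pd (hsm d a) b).add (contDiff_pd (hsm b a) d)).dAt)
    ((contDiff_pd (hsm b d) a).dAt),
    pd_add c ((contDiff_pd (hsm d a) b).dAt) ((contDiff_pd (hsm b a) d).dAt)]

lemma expand_pdchr (hs : symT g) (hp : posdef g) (hsm : smoothT g)
    (x : Pt n) (a b c d : Fin n) :
    pd c (fun y => ∑ l, g y a l * chr g y l b d) x
      = (∑ l, g x a l * pd c (fun y => chr g y l b d) x)
        + (∑ l, ∑ m, chr g x m a c * g x m l * chr g x l b d)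
        + ∑ l, ∑ m, g x a l * (chr g x l m c * chr g x m b d) := by
  rw [pd_sum Finset.univ (fun l => fun y => g y a l * chr g y l b d) c
    (fun l _ => ((hsm a l).mul (sm_chr hs hp hsm l b d)).dAt)]
  have e : ∀ l, pd c (fun y => g y a l * chr g y l b d) x
      = ((∑ m, chr g x m a c * g x m l) + ∑ m, chr g x m l c * g x a m) * chr g x l b d
        + g x a l * pd c (fun y => chr g y l b d) x := by
    intro l
    rw [pd_mul c (hsm a l).dAt (sm_chr hs hp hsm l b d).dAt, pd_g hs hp x a l c]
  simp only [e]
  rw [Finset.sum_add_distrib]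
  have e2 : ∀ l, ((∑ m, chr g x m a c * g x m l) + ∑ m, chr g x m l c * g x a m) * chr g x l b d
      = (∑ m, chr g x m a c * g x m l * chr g x l b d)
        + ∑ m, chr g x m l c * g x a m * chr g x l b d := by
    intro l
    rw [add_mul, Finset.sum_mul, Finset.sum_mul]
  simp only [e2]
  rw [Finset.sum_add_distrib]
  have e3 : ∑ l, ∑ m, chr g x m l c * g x a m * chr g x l b d
      = ∑ l, ∑ m, g x a l * (chr g x l m c * chr g x m b d) := by
    rw [Finset.sum_comm]
    exact Finset.sum_congr rfl fun l _ => Finset.sum_congr rfl fun m _ => by ring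
  rw [e3]
  ring

lemma riemLow_formula (hs : symT g) (hp : posdef g) (hsm : smoothT g)
    (x : Pt n) (a b c d : Fin n) :
    riemLow g x a b c d
      = pd c (fun y => ∑ l, g y a l * chr g y l b d) x
        - pd d (fun y => ∑ l, g y a l * chr g y l b c) x
        - (∑ l, ∑ m, chr g x m a c * g x m l * chr g x l b d)
        + ∑ l, ∑ m, chr g x m a d * g x m l * chr g x l b c := by
  have split : riemLow g x a b c d
      = (∑ l, g x a l * pd c (fun y => chr g y l b d) x)
        - (∑ l, g x a l * pd d (fun y => chr g y l b c) x)
        + (∑ l, ∑ m, g x a l * (chr g x l m c * chr g x m b d))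
        - ∑ l, ∑ m, g x a l * (chr g x l m d * chr g x m b c) := by
    simp only [riemLow, riem]
    have e : ∀ l, g x a l * (pd c (fun y => chr g y l b d) x - pd d (fun y => chr g y l b c) x
          + (∑ m, chr g x l m c * chr g x m b d) - ∑ m, chr g x l m d * chr g x m b c)
        = g x a l * pd c (fun y => chr g y l b d) x
          - g x a l * pd d (fun y => chr g y l b c) x
          + (∑ m, g x a l * (chr g x l m c * chr g x m b d))
          - ∑ m, g x a l * (chr g x l m d * chr g x m b c) := by
      intro l
      rw [mul_sub, mul_add, mul_sub, Finset.mul_sum, Finset.mul_sum]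
    simp only [e]
    simp only [Finset.sum_sub_distrib, Finset.sum_add_distrib]
  rw [split]
  have h1 := expand_pdchr hs hp hsm x a b c d
  have h2 := expand_pdchr hs hp hsm x a b d c
  linarith [h1, h2]

lemma riemLow_antisym (hs : symT g) (hp : posdef g) (hsm : smoothT g)
    (x : Pt n) (a b c d : Fin n) :
    riemLow g x a b c d + riemLow g x b a c d = 0 := by
  rw [riemLow_formula hs hp hsm x a b c d, riemLow_formula hs hp hsm x b a c d]
  rw [pd_chr_low hs hp hsm x a b c d, pd_chr_low hs hp hsm x a b d c,
    pd_chr_low hs hp hsm x b a c d, pd_chr_low hs hp hsm x b a d c]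
  rw [gfun_symm hs d a, gfun_symm hs b a, gfun_symm hs d b, gfun_symm hs c a,
    gfun_symm hs c b]
  rw [pd_comm (hsm a b) x d c]
  have hQ1 : ∑ l, ∑ m, chr g x m a c * g x m l * chr g x l b d
      = ∑ l, ∑ m, chr g x m b d * g x m l * chr g x l a c := by
    rw [Finset.sum_comm]
    refine Finset.sum_congr rfl fun l _ => Finset.sum_congr rfl fun m _ => ?_
    rw [hs x m l]
    ring
  have hQ2 : ∑ l, ∑ m, chr g x m a d * g x m l * chr g x l b c
      = ∑ l, ∑ m, chr g x m b c * g x m l * chr g x l a d := by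
    rw [Finset.sum_comm]
    refine Finset.sum_congr rfl fun l _ => Finset.sum_congr rfl fun m _ => ?_
    rw [hs x m l]
    ring
  rw [hQ1, hQ2]
  ring

end Aux6


section Aux7
variable {n : ℕ} {g : Pt n → Fin n → Fin n → ℝ} {X : Pt n → Fin n → ℝ}

lemma contraction (hs : symT g) (hp : posdef g) (hsm : smoothT g)
    (hX : ∀ i, ContDiff ℝ (⊤ : ℕ∞) (fun x => X x i)) (x : Pt n) (i : Fin n) :
    ∑ j, ∑ k, ginv g x j k *
        (cdCov2 g (lowerV g X) x j k i - cdCov2 g (lowerV g X) x j i k)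
      = -∑ p, ric g x p i * X x p := by
  have hY := sm_lowerV hsm hX
  have anti : ∀ p j k, (∑ m, g x p m * riem g x m j k i)
      = -∑ m, g x j m * riem g x m p k i := by
    intro p j k
    have h := riemLow_antisym hs hp hsm x p j k i
    simp only [riemLow] at h
    linarith
  calc ∑ j, ∑ k, ginv g x j k *
        (cdCov2 g (lowerV g X) x j k i - cdCov2 g (lowerV g X) x j i k)
      = ∑ j, ∑ k, ∑ p, ∑ m, ginv g x j k * (riem g x m j k i * (g x m p * X x p)) := by
        refine Finset.sum_congr rfl fun j _ => Finset.sum_congr rfl fun k _ => ?_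
        rw [comm2 hs hp hsm hY x j k i]
        simp only [lowerV, Finset.mul_sum]
        rw [Finset.sum_comm]
    _ = ∑ j, ∑ k, ∑ p, (∑ m, g x p m * riem g x m j k i) * (ginv g x j k * X x p) := by
        refine Finset.sum_congr rfl fun j _ => Finset.sum_congr rfl fun k _ =>
          Finset.sum_congr rfl fun p _ => ?_
        rw [Finset.sum_mul]
        refine Finset.sum_congr rfl fun m _ => ?_
        rw [hs x p m]
        ring
    _ = -∑ j, ∑ k, ∑ p, (∑ m, g x j m * riem g x m p k i) * (ginv g x j k * X x p) := by
        rw [← Finset.sum_neg_distrib]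
        refine Finset.sum_congr rfl fun j _ => ?_
        rw [← Finset.sum_neg_distrib]
        refine Finset.sum_congr rfl fun k _ => ?_
        rw [← Finset.sum_neg_distrib]
        refine Finset.sum_congr rfl fun p _ => ?_
        rw [anti p j k]
        ring
    _ = -∑ p, ∑ k, (∑ j, ∑ m, riem g x m p k i * g x m j * ginv g x j k) * X x p := by
        congr 1
        refine Eq.trans (Finset.sum_congr rfl fun j _ => Finset.sum_comm) ?_
        refine Eq.trans Finset.sum_comm ?_
        refine Finset.sum_congr rfl fun p _ => ?_
        rw [Finset.sum_comm]
        refine Finset.sum_congr rfl fun k _ => ?_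
        rw [Finset.sum_mul]
        refine Finset.sum_congr rfl fun j _ => ?_
        rw [Finset.sum_mul, Finset.sum_mul]
        refine Finset.sum_congr rfl fun m _ => ?_
        rw [hs x j m]
        ring
    _ = -∑ p, ∑ k, riem g x k p k i * X x p := by
        congr 1
        refine Finset.sum_congr rfl fun p _ => Finset.sum_congr rfl fun k _ => ?_
        rw [contract_gginv hs hp x (fun l => riem g x l p k i) k]
    _ = -∑ p, ric g x p i * X x p := by
        congr 1
        refine Finset.sum_congr rfl fun p _ => ?_
        rw [ric, Finset.sum_mul]

end Aux7


/-- at a static vacuum pair `(ḡ,ū)` with `ū > 0`, for any vector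
field `X`,
`G'(L_X ḡ, X(ū)) = -ΔX - ū⁻¹ ∇X(∇ū,·) + ū⁻² X(ū) dū`
(identifying `X` with its dual covector via `ḡ`). -/
theorem statement6 {n : ℕ} (g : Pt n → Fin n → Fin n → ℝ) (u : Pt n → ℝ)
    (hgsym : symT g) (hgpos : posdef g) (hgsm : smoothT g)
    (husm : ContDiff ℝ (⊤ : ℕ∞) u) (hupos : ∀ x, 0 < u x)
    -- static vacuum: `-ū Ric + ∇²ū = 0` and `Δū = 0`
    (hsv1 : ∀ x i j, -(u x) * ric g x i j + hess g u x i j = 0)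
    (hsv2 : ∀ x, lapf g u x = 0)
    (X : Pt n → Fin n → ℝ) (hXsm : ∀ i, ContDiff ℝ (⊤ : ℕ∞) (fun x => X x i)) :
    ∀ (x : Pt n) (i : Fin n),
      gaugeLin g u (lieg g X) (fun y => ∑ j, X y j * pd j u y) x i
        = -(∑ j, ∑ k, ginv g x j k * cdCov2 g (lowerV g X) x i j k)
          - (u x)⁻¹ * ∑ j, ∑ k, ginv g x j k * pd k u x * cdCov g (lowerV g X) x i j
          + ((u x)^2)⁻¹ * (∑ j, X x j * pd j u x) * pd i u x := by
  intro x i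
  have hu : u x ≠ 0 := (hupos x).ne'
  have h1 := divT_lieg hgsym hgpos hgsm hXsm x i
  have h2 := trT_lieg_pd hgsym hgpos hgsm hXsm x i
  have h3 := lemA hgsym hgpos hgsm husm hXsm x i
  have h5 := raise (u := u) hgsym hgpos hgsm hXsm x i
  have h4 : ∑ j, ∑ k, lieg g X x i j * ginv g x j k * pd k u x
      = (∑ j, ∑ k, ginv g x j k * pd k u x * cdCov g (lowerV g X) x i j)
        + ∑ j, ∑ k, ginv g x j k * pd k u x * cdCov g (lowerV g X) x j i := by
    rw [← Finset.sum_add_distrib]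
    refine Finset.sum_congr rfl fun j _ => ?_
    rw [← Finset.sum_add_distrib]
    refine Finset.sum_congr rfl fun k _ => ?_
    simp only [lieg]
    ring
  have hBA : (∑ j, ∑ k, ginv g x j k * cdCov2 g (lowerV g X) x j k i)
      - ∑ j, ∑ k, ginv g x j k * cdCov2 g (lowerV g X) x j i k
      = -∑ p, ric g x p i * X x p := by
    rw [← contraction hgsym hgpos hgsm hXsm x i]
    simp only [mul_sub, Finset.sum_sub_distrib]
  have h7 : ∑ j, X x j * hess g u x j i = u x * ∑ j, ric g x j i * X x j := by
    rw [Finset.mul_sum]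
    refine Finset.sum_congr rfl fun j _ => ?_
    have hh : hess g u x j i = u x * ric g x j i := by linarith [hsv1 x j i]
    rw [hh]
    ring
  have h9 : u x * (u x)⁻¹ = 1 := mul_inv_cancel₀ hu
  simp only [gaugeLin, bianchi]
  linear_combination (-1 : ℝ) * h1 + h2 + (u x)⁻¹ * h3 - (u x)⁻¹ * h4 - (u x)⁻¹ * h5
    + hBA + (u x)⁻¹ * h7 + (∑ p, ric g x p i * X x p) * h9
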